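/- arXiv:1704.08337 — 6 statements merged into one kernel-verified Lean document; each statement's English description precedes it below -/
import Mathlib

section
/- Let X be a metric space and let Γ be a group acting on X by isometries such that: (i) there exists a compact subset U ⊆ X with ⋃_{g∈Γ} g•U = X, and (ii) for every y ∈ X and every real C, the set {g ∈ Γ : dist(y, g•y) ≤ C} is finite. Then for every γ ∈ Γ the displacement function x ↦ dist(x, γ•x) attains its infimum: there exists x₀ ∈ X with dist(x₀, γ•x₀) = ⨅_{x∈X} dist(x, γ•x). (Metric form of Selberg's lemma, Proposition 2.9, first part: every element of a discrete cocompact subgroup is semisimple.) -/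
open Pointwise

/-!
Conjugating `γ` by `g` turns the displacement of `γ` at `g • u` into the displacement of
`g⁻¹ * γ * g` at `u`, so every value of `d_γ` is a value of some `d_h` on the compact set `U`.
Since `U` is bounded and orbits are discrete, only finitely many conjugates `h` move some point
of `U` by at most a given `C`. Choosing one conjugator for each of them, the values `≤ C` of
`d_γ` are all taken on a finite union of translates of `U`, a compact set on which the
continuous function `d_γ` has a minimum; this minimum is the global one.
-/

theorem exists_forall_le_of_isCompact {α β : Type*} [LinearOrder α] [TopologicalSpace α]
    [ClosedIicTopology α] [TopologicalSpace β] {f : β → α} {K : Set β} (hK : IsCompact K)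
    (hf : ContinuousOn f K) (x₁ : β) (hdom : ∀ x, f x ≤ f x₁ → ∃ y ∈ K, f y ≤ f x) :
    ∃ x₀, ∀ x, f x₀ ≤ f x := by
  obtain ⟨y₁, hy₁K, hy₁⟩ := hdom x₁ le_rfl
  obtain ⟨x₀, hx₀K, hx₀min⟩ := hK.exists_isMinOn ⟨y₁, hy₁K⟩ hf
  refine ⟨x₀, fun x => ?_⟩
  rcases le_total (f x) (f x₁) with hx | hx
  · obtain ⟨y, hyK, hy⟩ := hdom x hx
    exact (hx₀min hyK).trans hy
  · exact (hx₀min hy₁K).trans (hy₁.trans hx)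

section Displacement

variable {Γ X : Type*} [PseudoMetricSpace X]

def displacement [SMul Γ X] (γ : Γ) (x : X) : ℝ :=
  dist x (γ • x)

theorem continuous_displacement [SMul Γ X] [IsIsometricSMul Γ X] (γ : Γ) :
    Continuous (displacement γ : X → ℝ) :=
  continuous_id.dist (continuous_const_smul γ)

theorem displacement_smul [Group Γ] [MulAction Γ X] [IsIsometricSMul Γ X] (γ g : Γ) (x : X) :
    displacement γ (g • x) = displacement (g⁻¹ * γ * g) x := by
  simp only [displacement, mul_smul]
  rw [← dist_smul g x, smul_inv_smul]

theorem finite_setOf_exists_displacement_le [SMul Γ X] [IsIsometricSMul Γ X] {U : Set X}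
    (hU : Bornology.IsBounded U) {y : X} (hfin : ∀ C, {g : Γ | displacement g y ≤ C}.Finite)
    (C : ℝ) : {g : Γ | ∃ u ∈ U, displacement g u ≤ C}.Finite := by
  obtain ⟨R, hUR⟩ := hU.subset_closedBall y
  refine (hfin (C + 2 * R)).subset ?_
  rintro g ⟨u, huU, hgu⟩
  have huy : dist u y ≤ R := hUR huU
  calc dist y (g • y) ≤ dist y u + dist u (g • u) + dist (g • u) (g • y) := dist_triangle4 _ _ _ _
    _ = dist u y + displacement g u + dist u y := by rw [dist_smul, dist_comm y u]; rfl
    _ ≤ C + 2 * R := by linarith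

theorem exists_isCompact_forall_displacement_le_exists_mem [Group Γ] [MulAction Γ X]
    [IsIsometricSMul Γ X] {U : Set X} (hU : IsCompact U) (hcov : ∀ x : X, ∃ g : Γ, x ∈ g • U)
    {y : X} (hfin : ∀ C, {g : Γ | displacement g y ≤ C}.Finite) (γ : Γ) (C : ℝ) :
    ∃ K : Set X, IsCompact K ∧
      ∀ x : X, displacement γ x ≤ C → ∃ z ∈ K, displacement γ z = displacement γ x := by
  set conj : Γ → Γ := fun g => g⁻¹ * γ * g
  set G : Set Γ := {g | ∃ u ∈ U, displacement γ (g • u) ≤ C}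
  have hconjG : (conj '' G).Finite := by
    refine (finite_setOf_exists_displacement_le hU.isBounded hfin C).subset ?_
    rintro _ ⟨g, ⟨u, huU, hgu⟩, rfl⟩
    exact ⟨u, huU, displacement_smul γ g u ▸ hgu⟩
  -- one conjugator for each of the finitely many conjugates
  obtain ⟨G₀, -, hG₀, hG₀G⟩ :=
    Set.exists_subset_image_finite_and.mp ⟨conj '' G, subset_rfl, hconjG, subset_rfl⟩
  refine ⟨(⋃ g ∈ G₀, g • U : Set X), hG₀.isCompact_biUnion fun g _ => hU.smul g, fun x hx => ?_⟩
  obtain ⟨g, u, huU, rfl⟩ := hcov x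
  obtain ⟨g', hg'G₀, hg'⟩ := hG₀G ⟨g, ⟨u, huU, hx⟩, rfl⟩
  refine ⟨g' • u, Set.mem_biUnion hg'G₀ (Set.smul_mem_smul_set huU), ?_⟩
  rw [displacement_smul, displacement_smul]
  exact congrArg (displacement · u) hg'

end Displacement

/-- Metric form of Selberg's lemma (Proposition 2.9, first part): if a group `Γ` acts by
isometries on a metric space `X`, with a compact set `U` whose `Γ`-translates cover `X`,
and for every `y ∈ X` and `C ∈ ℝ` only finitely many `g ∈ Γ` satisfy `dist y (g • y) ≤ C`,
then for every `γ ∈ Γ` the displacement function `x ↦ dist x (γ • x)` attains its infimum. -/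
theorem displacement_function_attains_infimum
    (X : Type*) [MetricSpace X] [Nonempty X]
    (Γ : Type*) [Group Γ] [MulAction Γ X]
    (hiso : ∀ (g : Γ) (x y : X), dist (g • x) (g • y) = dist x y)
    (U : Set X) (hU : IsCompact U)
    (hcov : ∀ x : X, ∃ g : Γ, x ∈ g • U)
    (hfin : ∀ (y : X) (C : ℝ), {g : Γ | dist y (g • y) ≤ C}.Finite)
    (γ : Γ) :
    ∃ x₀ : X, dist x₀ (γ • x₀) = ⨅ x : X, dist x (γ • x) := by
  have : IsIsometricSMul Γ X := ⟨fun g => Isometry.of_dist_eq (hiso g)⟩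
  obtain ⟨x₁⟩ := ‹Nonempty X›
  obtain ⟨K, hK, hKdisp⟩ :=
    exists_isCompact_forall_displacement_le_exists_mem hU hcov (hfin x₁) γ (displacement γ x₁)
  obtain ⟨x₀, hx₀⟩ := exists_forall_le_of_isCompact hK (continuous_displacement γ).continuousOn x₁
    fun x hx => (hKdisp x hx).imp fun _ ⟨hzK, hz⟩ => ⟨hzK, hz.le⟩
  exact ⟨x₀, (ciInf_eq_of_forall_ge_of_forall_gt_exists_lt hx₀ fun _ hw => ⟨x₀, hw⟩).symm⟩
end

section
/- Let G be a Hausdorff, locally compact, second-countable topological group and let Γ be a discrete subgroup of G such that the coset space G⧸Γ is compact. Then for every γ ∈ Γ, writing Z for the centralizer of γ in G, the coset space Z⧸(Z ∩ Γ) is compact. (Selberg's lemma, Proposition 2.9, second part: Γ ∩ Z(γ) is cocompact in Z(γ).) -/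
/-!
Pick a compact `K ⊆ G` with `K Γ = G` and write `z ∈ Z(γ)` as `z = k l` with `k ∈ K`, `l ∈ Γ`.
Then `l γ l⁻¹ = k⁻¹ γ k` lies in the finite set `Γ ∩ K⁻¹ γ K`. Fixing one `f ∈ Γ` for each such
conjugate with `f γ f⁻¹ = l γ l⁻¹` gives `f⁻¹ l ∈ Z(γ) ∩ Γ`, so `Z(γ) ⊆ (K F) (Z(γ) ∩ Γ)` for a
finite `F ⊆ Γ`. As `Z(γ)` is closed, `Z(γ) ∩ K F` is a compact set mapping onto
`Z(γ) ⧸ (Z(γ) ∩ Γ)`.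
-/

open Set Pointwise

theorem IsOpenMap.exists_isCompact_image_eq_univ {X Y : Type*} [TopologicalSpace X]
    [TopologicalSpace Y] [WeaklyLocallyCompactSpace X] [CompactSpace Y] {f : X → Y}
    (hf : IsOpenMap f) (hsurj : Function.Surjective f) :
    ∃ K : Set X, IsCompact K ∧ f '' K = univ := by
  choose N hNc hNn using fun x : X ↦ exists_compact_mem_nhds x
  have hcover : univ ⊆ ⋃ x, f '' interior (N x) := fun y _ ↦ by
    obtain ⟨x, rfl⟩ := hsurj y
    exact mem_iUnion.2 ⟨x, mem_image_of_mem f (mem_interior_iff_mem_nhds.2 (hNn x))⟩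
  obtain ⟨t, ht⟩ :=
    isCompact_univ.elim_finite_subcover _ (fun x ↦ hf _ isOpen_interior) hcover
  refine ⟨⋃ x ∈ t, N x, t.isCompact_biUnion fun x _ ↦ hNc x, eq_univ_of_univ_subset ?_⟩
  refine ht.trans (iUnion₂_subset fun x hx ↦ ?_)
  exact image_mono (interior_subset.trans (subset_biUnion_of_mem (u := N) hx))

theorem Subgroup.finite_inter_of_isCompact {G : Type*} [Group G] [TopologicalSpace G]
    [IsTopologicalGroup G] [T2Space G] (Γ : Subgroup G) [DiscreteTopology Γ] {K : Set G}
    (hK : IsCompact K) : ((Γ : Set G) ∩ K).Finite := by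
  have hfin := tendsto_cofinite_cocompact_iff.mp
    (Γ.tendsto_coe_cofinite_of_discrete (isDiscrete_iff_discreteTopology.mpr ‹_›)) K hK
  convert hfin.image ((↑) : Γ → G) using 1
  exact (Subtype.image_preimage_coe (Γ : Set G) K).symm

theorem Subgroup.inv_mul_mem_centralizer_singleton_iff {G : Type*} [Group G] {γ f l : G} :
    f⁻¹ * l ∈ Subgroup.centralizer {γ} ↔ f * γ * f⁻¹ = l * γ * l⁻¹ := by
  rw [Subgroup.mem_centralizer_singleton_iff]
  constructor <;> intro h
  · calc f * γ * f⁻¹ = f * (f⁻¹ * l * γ) * l⁻¹ := by rw [h]; group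
      _ = l * γ * l⁻¹ := by group
  · calc f⁻¹ * l * γ = f⁻¹ * (l * γ * l⁻¹) * l := by group
      _ = γ * (f⁻¹ * l) := by rw [← h]; group

theorem Set.exists_finite_subset_image_superset {α β : Type*} {f : α → β} {s : Set α}
    {T : Set β} (hT : (f '' s ∩ T).Finite) :
    ∃ F ⊆ s, F.Finite ∧ f '' s ∩ T ⊆ f '' F :=
  exists_subset_image_finite_and.mp ⟨f '' s ∩ T, inter_subset_left, hT, subset_rfl⟩

theorem QuotientGroup.compactSpace_of_isCompact {G : Type*} [Group G] [TopologicalSpace G]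
    (N : Subgroup G) {C : Set G} (hC : IsCompact C) (hCN : ∀ g, ∃ c ∈ C, c⁻¹ * g ∈ N) :
    CompactSpace (G ⧸ N) := by
  refine isCompact_univ_iff.mp ?_
  convert hC.image QuotientGroup.continuous_mk
  refine (eq_univ_of_univ_subset fun q _ ↦ ?_).symm
  obtain ⟨g, rfl⟩ := QuotientGroup.mk_surjective q
  obtain ⟨c, hc, hcg⟩ := hCN g
  exact ⟨c, hc, QuotientGroup.eq.mpr hcg⟩

theorem Subgroup.compactSpace_quotient_subgroupOf {G : Type*} [Group G] [TopologicalSpace G]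
    {Z : Subgroup G} (hZ : IsClosed (Z : Set G)) (Γ : Subgroup G) {C : Set G}
    (hC : IsCompact C) (hCZ : ∀ z ∈ Z, ∃ c ∈ C, c⁻¹ * z ∈ Z ⊓ Γ) :
    CompactSpace (Z ⧸ Γ.subgroupOf Z) := by
  refine QuotientGroup.compactSpace_of_isCompact _
    (hZ.isClosedEmbedding_subtypeVal.isCompact_preimage hC) fun z ↦ ?_
  obtain ⟨c, hc, hcz, hczΓ⟩ := hCZ z z.2
  have hcZ : c ∈ Z := by simpa using Z.mul_mem z.2 (Z.inv_mem hcz)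
  exact ⟨⟨c, hcZ⟩, hc, hczΓ⟩

theorem Subgroup.exists_inv_mul_mem_centralizer_inf {G : Type*} [Group G] {Γ : Subgroup G}
    {γ z k : G} {K F : Set G} (hFΓ : F ⊆ Γ)
    (hF : (fun l ↦ l * γ * l⁻¹) '' Γ ∩ (K⁻¹ * {γ} * K) ⊆ (fun l ↦ l * γ * l⁻¹) '' F)
    (hz : z ∈ Subgroup.centralizer {γ}) (hk : k ∈ K) (hkz : k⁻¹ * z ∈ Γ) :
    ∃ c ∈ K * F, c⁻¹ * z ∈ Subgroup.centralizer {γ} ⊓ Γ := by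
  have hconj : k⁻¹ * γ * k⁻¹⁻¹ = (k⁻¹ * z) * γ * (k⁻¹ * z)⁻¹ :=
    Subgroup.inv_mul_mem_centralizer_singleton_iff.mp (by simpa using hz)
  have hmem : (k⁻¹ * z) * γ * (k⁻¹ * z)⁻¹ ∈ K⁻¹ * {γ} * K := by
    rw [← hconj, inv_inv]
    exact mul_mem_mul (mul_mem_mul (inv_mem_inv.mpr hk) rfl) hk
  obtain ⟨f, hf, hfz⟩ := hF ⟨⟨k⁻¹ * z, hkz, rfl⟩, hmem⟩
  refine ⟨k * f, mul_mem_mul hk hf, ?_⟩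
  rw [mul_inv_rev, mul_assoc]
  exact ⟨Subgroup.inv_mul_mem_centralizer_singleton_iff.mpr hfz,
    Γ.mul_mem (Γ.inv_mem (hFΓ hf)) hkz⟩

theorem centralizer_cocompact_of_discrete_cocompact_general
    (G : Type*) [Group G] [TopologicalSpace G] [IsTopologicalGroup G]
    [T2Space G] [LocallyCompactSpace G]
    (Γ : Subgroup G) [DiscreteTopology Γ] [CompactSpace (G ⧸ Γ)]
    (γ : G) (hγ : γ ∈ Γ) :
    CompactSpace (↥(Subgroup.centralizer {γ}) ⧸
      Γ.subgroupOf (Subgroup.centralizer {γ})) := by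
  obtain ⟨K, hK, hKΓ⟩ := QuotientGroup.isOpenMap_coe.exists_isCompact_image_eq_univ
    (QuotientGroup.mk_surjective (s := Γ))
  have hfin : ((fun l ↦ l * γ * l⁻¹) '' Γ ∩ (K⁻¹ * {γ} * K)).Finite :=
    (Γ.finite_inter_of_isCompact ((hK.inv.mul isCompact_singleton).mul hK)).subset <|
      inter_subset_inter_left _ (image_subset_iff.mpr fun l hl ↦
        Γ.mul_mem (Γ.mul_mem hl hγ) (Γ.inv_mem hl) : _ ⊆ (Γ : Set G))
  obtain ⟨F, hFΓ, hF, hFconj⟩ := exists_finite_subset_image_superset hfin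
  refine Subgroup.compactSpace_quotient_subgroupOf (Set.isClosed_centralizer {γ}) Γ
    (hK.mul hF.isCompact) fun z hz ↦ ?_
  obtain ⟨k, hk, hkz⟩ := hKΓ.symm ▸ mem_univ (z : G ⧸ Γ)
  exact Subgroup.exists_inv_mul_mem_centralizer_inf hFΓ hFconj hz hk (QuotientGroup.eq.mp hkz)

/-- Selberg's lemma (Proposition 2.9, second part): if `Γ` is a discrete subgroup of a
Hausdorff, locally compact, second-countable topological group `G` with `G ⧸ Γ` compact,
then for every `γ ∈ Γ` the quotient `Z(γ) ⧸ (Z(γ) ∩ Γ)` of the centralizer `Z(γ)` of `γ`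
in `G` is compact. -/
theorem centralizer_cocompact_of_discrete_cocompact
    (G : Type*) [Group G] [TopologicalSpace G] [IsTopologicalGroup G]
    [T2Space G] [LocallyCompactSpace G] [SecondCountableTopology G]
    (Γ : Subgroup G) [DiscreteTopology Γ] [CompactSpace (G ⧸ Γ)]
    (γ : G) (hγ : γ ∈ Γ) :
    CompactSpace (↥(Subgroup.centralizer {γ}) ⧸
      Γ.subgroupOf (Subgroup.centralizer {γ})) :=
  centralizer_cocompact_of_discrete_cocompact_general G Γ γ hγ
end

section
/- Let V be a finite-dimensional real vector space of dimension n and f an endomorphism of V. If the eigenspace ker(f − id_V) has dimension at least 2, then ∑_{j=0}^{n} (−1)^j · j · tr(Λ^j f) = 0. (The vanishing criterion from equation (4.2.9) used in the proof of Theorem 4.2.2.) -/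
/-!
Fix a vector `e` with `f e = e` and a functional `d` with `d e = 1`. Cartan's identity
`ι_d (e ∧ x) + e ∧ ι_d x = x` splits `Λf` as `ψ + e ∧ ι_d Λf` with `ψ = ι_d ∘ (e ∧ ·) ∘ Λf`.
Since `Λf` commutes with `e ∧ ·`, cyclicity of the trace turns the trace of the second summand
on `⋀^(j+1)` into the trace of `ψ` on `⋀^j`. So `tr Λ^j f = a_j + a_(j-1)` with `a_j = tr ψ_j`
and `a_n = 0`, i.e. `∑ tr Λ^j f X^j = (1 + X) ∑ a_j X^j`. If `d` also kills a second fixed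
vector `e'`, then `ψ` commutes with `e' ∧ ·` and the same step applies to `ψ`. Hence
`(1 + X)^2` divides `∑ tr Λ^j f X^j`, whose derivative therefore vanishes at `X = -1`: this
is the weighted alternating sum.
-/

open ExteriorAlgebra

/-- The endomorphism of the `j`-th exterior power `⋀[R]^j M` induced by an endomorphism
`f` of `M` (the restriction to `⋀[R]^j M` of the algebra morphism `Λ•f`). -/
noncomputable def exteriorPowerMap {R M : Type*} [CommRing R] [AddCommGroup M] [Module R M]
    (j : ℕ) (f : M →ₗ[R] M) : ⋀[R]^j M →ₗ[R] ⋀[R]^j M :=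
  (ExteriorAlgebra.map f).toLinearMap.restrict (p := ⋀[R]^j M) (q := ⋀[R]^j M)
    (fun x hx => by
      rw [← ιMulti_span_fixedDegree] at hx ⊢
      induction hx using Submodule.span_induction with
      | mem y hy =>
        obtain ⟨m, rfl⟩ := hy
        exact Submodule.subset_span ⟨f ∘ m, (map_apply_ιMulti f m).symm⟩
      | zero => simp
      | add y z _ _ h1 h2 =>
        rw [map_add]; exact Submodule.add_mem _ h1 h2
      | smul r y _ h =>
        rw [map_smul]; exact Submodule.smul_mem _ r h)

section AlternatingSums

variable {R : Type*} [CommRing R] {t a : ℕ → R}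

theorem sum_range_succ_neg_one_pow_mul_eq (h0 : t 0 = a 0)
    (hsucc : ∀ j, t (j + 1) = a (j + 1) + a j) (n : ℕ) :
    ∑ j ∈ Finset.range (n + 1), (-1) ^ j * t j = (-1) ^ n * a n := by
  induction n with
  | zero => simp [h0]
  | succ n ih =>
    rw [Finset.sum_range_succ, ih, hsucc]
    ring

theorem sum_range_succ_neg_one_pow_mul_natCast_mul_eq (h0 : t 0 = a 0)
    (hsucc : ∀ j, t (j + 1) = a (j + 1) + a j) (n : ℕ) :
    ∑ j ∈ Finset.range (n + 1), (-1) ^ j * (j : R) * t j =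
      (-1) ^ n * (n + 1) * a n - ∑ j ∈ Finset.range (n + 1), (-1) ^ j * a j := by
  induction n with
  | zero => simp [h0]
  | succ n ih =>
    rw [Finset.sum_range_succ, ih, hsucc, Finset.sum_range_succ _ (n + 1)]
    push_cast
    ring

end AlternatingSums

namespace ExteriorAlgebra

variable {R M : Type*} [CommRing R] [AddCommGroup M] [Module R M]

open CliffordAlgebra (contractLeft contractLeft_ι_mul)

theorem ι_mul_mem_exteriorPower (e : M) {j : ℕ} {x : ExteriorAlgebra R M}
    (hx : x ∈ ⋀[R]^j M) : ι R e * x ∈ ⋀[R]^(j + 1) M := by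
  rw [exteriorPower, pow_succ']
  exact Submodule.mul_mem_mul (LinearMap.mem_range_self _ e) hx

theorem contractLeft_eq_zero_of_mem_exteriorPower_zero (d : Module.Dual R M)
    {x : ExteriorAlgebra R M} (hx : x ∈ ⋀[R]^0 M) : contractLeft d x = 0 := by
  rw [exteriorPower, pow_zero] at hx
  obtain ⟨r, rfl⟩ := Submodule.mem_one.mp hx
  exact CliffordAlgebra.contractLeft_algebraMap _ d r

theorem contractLeft_mem_exteriorPower (d : Module.Dual R M) {j : ℕ} {x : ExteriorAlgebra R M}
    (hx : x ∈ ⋀[R]^(j + 1) M) : contractLeft d x ∈ ⋀[R]^j M := by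
  rw [exteriorPower, pow_succ'] at hx
  refine Submodule.mul_induction_on hx (fun m hm y hy => ?_) (fun y z hy hz => ?_)
  · obtain ⟨a, rfl⟩ := hm
    rw [contractLeft_ι_mul]
    refine Submodule.sub_mem _ (Submodule.smul_mem _ _ hy) ?_
    cases j with
    | zero =>
      rw [contractLeft_eq_zero_of_mem_exteriorPower_zero d hy, mul_zero]
      exact Submodule.zero_mem _
    | succ k => exact ι_mul_mem_exteriorPower a (contractLeft_mem_exteriorPower d hy)
  · rw [map_add]; exact Submodule.add_mem _ hy hz

theorem exteriorPower_eq_bot_of_finrank_lt [Nontrivial R] [Module.Free R M] [Module.Finite R M]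
    {k : ℕ} (hk : Module.finrank R M < k) : ⋀[R]^k M = ⊥ := by
  have : Subsingleton (⋀[R]^k M) := by
    rw [← Module.finrank_eq_zero_iff_of_free R, exteriorPower.finrank_eq,
      Nat.choose_eq_zero_of_lt hk]
  exact Submodule.eq_bot_of_subsingleton

theorem map_ι_mul_of_apply_eq {e : M} {f : M →ₗ[R] M} (he : f e = e) (x : ExteriorAlgebra R M) :
    map f (ι R e * x) = ι R e * map f x := by
  rw [map_mul, map_apply_ι, he]

def PreservesDegree (φ : Module.End R (ExteriorAlgebra R M)) : Prop :=
  ∀ j, ∀ x ∈ ⋀[R]^j M, φ x ∈ ⋀[R]^j M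

noncomputable def gradedTrace (φ : Module.End R (ExteriorAlgebra R M)) (hφ : PreservesDegree φ)
    (j : ℕ) : R :=
  LinearMap.trace R (⋀[R]^j M) (φ.restrict (hφ j))

noncomputable def compressAlong (e : M) (d : Module.Dual R M)
    (φ : Module.End R (ExteriorAlgebra R M)) : Module.End R (ExteriorAlgebra R M) :=
  contractLeft d ∘ₗ LinearMap.mulLeft R (ι R e) ∘ₗ φ

section Compression

variable (e : M) (d : Module.Dual R M) {φ : Module.End R (ExteriorAlgebra R M)}

theorem compressAlong_apply (x : ExteriorAlgebra R M) :
    compressAlong e d φ x = contractLeft d (ι R e * φ x) := rfl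

theorem PreservesDegree.compressAlong (hφ : PreservesDegree φ) :
    PreservesDegree (compressAlong e d φ) := fun j x hx =>
  contractLeft_mem_exteriorPower d (ι_mul_mem_exteriorPower e (hφ j x hx))

variable {e d}

theorem compressAlong_add_ι_mul_contractLeft (hde : d e = 1) (x : ExteriorAlgebra R M) :
    compressAlong e d φ x + ι R e * contractLeft d (φ x) = φ x := by
  rw [compressAlong_apply, contractLeft_ι_mul, hde, one_smul, sub_add_cancel]

theorem compressAlong_ι_mul {e' : M} (hde' : d e' = 0)
    (hφe' : ∀ x, φ (ι R e' * x) = ι R e' * φ x) (x : ExteriorAlgebra R M) :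
    compressAlong e d φ (ι R e' * x) = ι R e' * compressAlong e d φ x := by
  rw [compressAlong_apply, compressAlong_apply, hφe', ← mul_assoc,
    eq_neg_of_add_eq_zero_left (ι_add_mul_swap e e'), neg_mul, mul_assoc, map_neg,
    contractLeft_ι_mul, hde', zero_smul, zero_sub, neg_neg]

variable (hφ : PreservesDegree φ)

theorem gradedTrace_zero_eq_compressAlong (hde : d e = 1) :
    gradedTrace φ hφ 0 = gradedTrace (compressAlong e d φ) (hφ.compressAlong e d) 0 := by
  refine congrArg _ (LinearMap.ext fun x => Subtype.ext ?_)
  rw [LinearMap.coe_restrict_apply, LinearMap.coe_restrict_apply,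
    ← compressAlong_add_ι_mul_contractLeft hde (x : ExteriorAlgebra R M),
    contractLeft_eq_zero_of_mem_exteriorPower_zero d (hφ 0 x x.2), mul_zero, add_zero]

theorem gradedTrace_succ_eq_compressAlong [Module.Free R M] [Module.Finite R M] (hde : d e = 1)
    (hφe : ∀ x, φ (ι R e * x) = ι R e * φ x) (j : ℕ) :
    gradedTrace φ hφ (j + 1) = gradedTrace (compressAlong e d φ) (hφ.compressAlong e d) (j + 1)
      + gradedTrace (compressAlong e d φ) (hφ.compressAlong e d) j := by
  let wedge : ⋀[R]^j M →ₗ[R] ⋀[R]^(j + 1) M :=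
    (LinearMap.mulLeft R (ι R e)).restrict fun _ => ι_mul_mem_exteriorPower e
  let contract : ⋀[R]^(j + 1) M →ₗ[R] ⋀[R]^j M :=
    (contractLeft d ∘ₗ φ).restrict fun x hx => contractLeft_mem_exteriorPower d (hφ _ x hx)
  have hsplit : φ.restrict (hφ (j + 1)) =
      (compressAlong e d φ).restrict (hφ.compressAlong e d (j + 1)) + wedge ∘ₗ contract := by
    refine LinearMap.ext fun x => Subtype.ext ?_
    exact (compressAlong_add_ι_mul_contractLeft hde (x : ExteriorAlgebra R M)).symm
  have hcomm : contract ∘ₗ wedge = (compressAlong e d φ).restrict (hφ.compressAlong e d j) := by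
    refine LinearMap.ext fun x => Subtype.ext ?_
    exact congrArg (contractLeft d) (hφe x)
  rw [gradedTrace, hsplit, map_add, LinearMap.trace_comp_comm', hcomm]
  rfl

theorem gradedTrace_compressAlong_eq_zero [Nontrivial R] [Module.Free R M] [Module.Finite R M]
    {n : ℕ} (hn : Module.finrank R M ≤ n) :
    gradedTrace (compressAlong e d φ) (hφ.compressAlong e d) n = 0 := by
  have hzero : (compressAlong e d φ).restrict (hφ.compressAlong e d n) = 0 := by
    refine LinearMap.ext fun x => Subtype.ext ?_
    have htop := ι_mul_mem_exteriorPower e (hφ n x x.2)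
    rw [exteriorPower_eq_bot_of_finrank_lt (Nat.lt_succ_of_le hn), Submodule.mem_bot] at htop
    rw [LinearMap.coe_restrict_apply, compressAlong_apply, htop, map_zero]
    rfl
  rw [gradedTrace, hzero, map_zero]

end Compression

variable [Nontrivial R] [Module.Free R M] [Module.Finite R M] {e : M} {d : Module.Dual R M}
  {φ : Module.End R (ExteriorAlgebra R M)}

theorem sum_neg_one_pow_mul_gradedTrace_eq_zero (hφ : PreservesDegree φ) (hde : d e = 1)
    (hφe : ∀ x, φ (ι R e * x) = ι R e * φ x) :
    ∑ j ∈ Finset.range (Module.finrank R M + 1), (-1) ^ j * gradedTrace φ hφ j = 0 := by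
  rw [sum_range_succ_neg_one_pow_mul_eq (gradedTrace_zero_eq_compressAlong hφ hde)
    (gradedTrace_succ_eq_compressAlong hφ hde hφe), gradedTrace_compressAlong_eq_zero hφ le_rfl,
    mul_zero]

theorem sum_neg_one_pow_mul_natCast_mul_gradedTrace_eq (hφ : PreservesDegree φ) (hde : d e = 1)
    (hφe : ∀ x, φ (ι R e * x) = ι R e * φ x) :
    ∑ j ∈ Finset.range (Module.finrank R M + 1), (-1) ^ j * (j : R) * gradedTrace φ hφ j =
      -∑ j ∈ Finset.range (Module.finrank R M + 1),
        (-1) ^ j * gradedTrace (compressAlong e d φ) (hφ.compressAlong e d) j := by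
  rw [sum_range_succ_neg_one_pow_mul_natCast_mul_eq (gradedTrace_zero_eq_compressAlong hφ hde)
    (gradedTrace_succ_eq_compressAlong hφ hde hφe), gradedTrace_compressAlong_eq_zero hφ le_rfl,
    mul_zero, zero_sub]

end ExteriorAlgebra

theorem Submodule.exists_dual_pair_of_two_le_finrank {K V : Type*} [Field K] [AddCommGroup V]
    [Module K V] {W : Submodule K V} (hW : 2 ≤ Module.finrank K W) :
    ∃ e₀ ∈ W, ∃ e₁ ∈ W, ∃ α β : Module.Dual K V, α e₀ = 1 ∧ α e₁ = 0 ∧ β e₁ = 1 := by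
  have : Nontrivial ↥W := Module.nontrivial_of_finrank_pos (R := K) (by omega)
  obtain ⟨x, hx⟩ := exists_ne (0 : W)
  obtain ⟨y, hxy⟩ := exists_linearIndependent_pair_of_one_lt_finrank hW hx
  obtain ⟨hy, hxy⟩ : (y : V) ≠ 0 ∧ ∀ a : K, a • (y : V) ≠ x :=
    linearIndependent_fin2.mp (hxy.map' W.subtype W.ker_subtype)
  have hx' : (x : V) ∉ K ∙ (y : V) := fun hmem =>
    let ⟨a, ha⟩ := Submodule.mem_span_singleton.mp hmem
    hxy a ha
  obtain ⟨α, hα, hαx⟩ := LinearMap.exists_extend_of_notMem (0 : (K ∙ (y : V)) →ₗ[K] K) hx' 1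
  obtain ⟨β, -, hβy⟩ := LinearMap.exists_extend_of_notMem (0 : (⊥ : Submodule K V) →ₗ[K] K)
    (Submodule.mem_bot K |>.not.mpr hy) 1
  refine ⟨x, x.2, y, y.2, α, β, hαx, ?_, hβy⟩
  simpa using LinearMap.congr_fun hα ⟨y, Submodule.mem_span_singleton_self _⟩

/-- The vanishing criterion from equation (4.2.9): if the fixed space `ker(f − 1)` of an
endomorphism `f` of an `n`-dimensional real vector space has dimension at least `2`, then
`∑_{j=0}^{n} (−1)^j j tr(Λ^j f) = 0`. -/
theorem alternating_weighted_trace_sum_eq_zero_of_two_le_finrank_fixed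
    (V : Type*) [AddCommGroup V] [Module ℝ V] [FiniteDimensional ℝ V]
    (n : ℕ) (hn : Module.finrank ℝ V = n) (f : V →ₗ[ℝ] V)
    (hfix : 2 ≤ Module.finrank ℝ ↥(LinearMap.ker (f - LinearMap.id))) :
    ∑ j ∈ Finset.range (n + 1),
      (-1 : ℝ) ^ j * (j : ℝ) * LinearMap.trace ℝ (⋀[ℝ]^j V) (exteriorPowerMap j f) = 0 := by
  obtain ⟨e₀, he₀, e₁, he₁, α, β, hα₀, hα₁, hβ₁⟩ :=
    Submodule.exists_dual_pair_of_two_le_finrank hfix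
  have hfixed {e : V} (he : e ∈ LinearMap.ker (f - LinearMap.id)) : f e = e := by
    simpa [sub_eq_zero] using he
  have hφ : PreservesDegree (map f).toLinearMap := fun j x hx => (exteriorPowerMap j f ⟨x, hx⟩).2
  subst hn
  show ∑ j ∈ Finset.range (Module.finrank ℝ V + 1),
    (-1) ^ j * (j : ℝ) * gradedTrace (map f).toLinearMap hφ j = 0
  rw [sum_neg_one_pow_mul_natCast_mul_gradedTrace_eq hφ hα₀ (map_ι_mul_of_apply_eq (hfixed he₀)),
    sum_neg_one_pow_mul_gradedTrace_eq_zero (hφ.compressAlong e₀ α) hβ₁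
      (compressAlong_ι_mul hα₁ (map_ι_mul_of_apply_eq (hfixed he₁))), neg_zero]
end

section
/- Let V = V⁺ ⊕ V⁻ be a finite-dimensional complex inner product space with an orthogonal ℤ₂-grading, let D be a self-adjoint endomorphism of V that is odd (D(V⁺) ⊆ V⁻ and D(V⁻) ⊆ V⁺), and let H be an even endomorphism (H(V^±) ⊆ V^±) commuting with D. Then for every real t, str(H ∘ exp(−t D²)) = str(H restricted to ker D), where str(A) = tr(τ A) with τ = id on V⁺ and τ = −id on V⁻. In particular str(H exp(−tD²)) is independent of t. (Finite-dimensional McKean–Singer formula, the mechanism of Theorem 1.1.) -/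
/-!
On `(ker D)ᗮ` the self-adjoint operator `D` is invertible: there is `G` with
`D G = G D = P`, the orthogonal projection onto `(ker D)ᗮ`. The grading `τ` anticommutes with the
odd operator `D`, while `M = H exp(-tD²)` commutes with it, so by cyclicity of the trace
`tr(τ M P) = tr(τ M D G) = -tr(D τ M G) = -tr(τ M G D) = -tr(τ M P)`, i.e. the supertrace of `M`
on `(ker D)ᗮ` vanishes. On `ker D` the heat operator `exp(-tD²)` is the identity.
-/

open LinearMap

theorem NormedSpace.exp_apply_eq_self_of_apply_eq_zero {𝕜 E : Type*} [RCLike 𝕜]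
    [NormedAddCommGroup E] [NormedSpace 𝕜 E] [CompleteSpace E] {A : E →L[𝕜] E} {x : E}
    (hx : A x = 0) : NormedSpace.exp A x = x := by
  have h := (NormedSpace.exp_series_hasSum_exp' (𝕂 := 𝕜) A).mapL
    (ContinuousLinearMap.apply 𝕜 E x)
  refine h.unique (hasSum_single 0 fun n hn => ?_) |>.trans (by simp)
  obtain ⟨m, rfl⟩ := Nat.exists_eq_succ_of_ne_zero hn
  simp [pow_succ, hx]

theorem grading_mul_eq_neg_mul_grading_of_odd {R M : Type*} [Ring R] [AddCommGroup M]
    [Module R M] {Vp Vm : Submodule R M} (h : IsCompl Vp Vm) {τ D : Module.End R M}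
    (hτp : ∀ x ∈ Vp, τ x = x) (hτm : ∀ x ∈ Vm, τ x = -x)
    (hDp : ∀ x ∈ Vp, D x ∈ Vm) (hDm : ∀ x ∈ Vm, D x ∈ Vp) : τ * D = -(D * τ) := by
  ext x
  obtain ⟨p, m, hp, hm, rfl⟩ := Submodule.codisjoint_iff_exists_add_eq.mp h.codisjoint x
  simp [hτp p hp, hτm m hm, hτm _ (hDp p hp), hτp _ (hDm m hm), add_comm]

theorem LinearMap.trace_mul_eq_zero_of_anticommute {R M : Type*} [CommRing R]
    [NoZeroDivisors R] [CharZero R] [AddCommGroup M] [Module R M]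
    {τ D X G P : Module.End R M} (hτ : τ * D = -(D * τ)) (hX : Commute X D)
    (hDG : D * G = P) (hGD : G * D = P) : trace R M (τ * X * P) = 0 := by
  refine CharZero.eq_neg_self_iff.mp ?_
  calc trace R M (τ * X * P) = trace R M (τ * (X * D) * G) := by rw [← hDG]; noncomm_ring
    _ = trace R M (-(D * (τ * X * G))) := by rw [hX.eq, ← mul_assoc, hτ]; noncomm_ring
    _ = -trace R M (τ * X * (G * D)) := by rw [map_neg, trace_mul_comm, mul_assoc]
    _ = -trace R M (τ * X * P) := by rw [hGD]

theorem LinearMap.IsSymmetric.exists_mul_eq_starProjection_orthogonal_ker {𝕜 E : Type*}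
    [RCLike 𝕜] [NormedAddCommGroup E] [InnerProductSpace 𝕜 E] [FiniteDimensional 𝕜 E]
    {D : E →ₗ[𝕜] E} (hD : D.IsSymmetric) :
    ∃ G : Module.End 𝕜 E,
      D * G = (ker D)ᗮ.starProjection ∧ G * D = (ker D)ᗮ.starProjection := by
  set W := (ker D)ᗮ
  have hDW (x : E) : D x ∈ W := by
    have h := (range D).le_orthogonal_orthogonal (mem_range_self D x)
    rwa [hD.orthogonal_range] at h
  let Dw : W →ₗ[𝕜] W := D.codRestrict W hDW ∘ₗ W.subtype
  have hDw : Function.Injective Dw := by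
    refine (injective_iff_map_eq_zero Dw).2 fun z hz => Subtype.ext ?_
    exact (ker D).orthogonal_disjoint.le_bot ⟨congrArg Subtype.val hz, z.2⟩
  let e := LinearEquiv.ofInjectiveEndo Dw hDw
  refine ⟨W.subtype ∘ₗ e.symm.toLinearMap ∘ₗ W.orthogonalProjectionOnto.toLinearMap, ?_, ?_⟩
  · ext x
    exact congrArg Subtype.val (e.apply_symm_apply (W.orthogonalProjectionOnto x))
  · ext x
    have hx : D x = Dw (W.orthogonalProjectionOnto x) := by
      have : x - W.starProjection x ∈ ker D :=
        (ker D).orthogonal_orthogonal.le (W.sub_starProjection_mem_orthogonal x)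
      simpa [sub_eq_zero, Dw] using this
    have : W.orthogonalProjectionOnto (D x) = e (W.orthogonalProjectionOnto x) := by
      rw [hx]
      exact W.orthogonalProjectionOnto_mem_subspace_eq_self _
    simp [this, W]

theorem mcKeanSinger_finite_dimensional_general
    (V : Type*) [NormedAddCommGroup V] [InnerProductSpace ℂ V] [FiniteDimensional ℂ V]
    (Vp Vm : Submodule ℂ V) (hcompl : IsCompl Vp Vm)
    (τ : V →ₗ[ℂ] V) (hτp : ∀ x ∈ Vp, τ x = x) (hτm : ∀ x ∈ Vm, τ x = -x)
    (D H : V →L[ℂ] V)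
    (hD : ∀ x y : V, (inner ℂ (D x) y : ℂ) = (inner ℂ x (D y) : ℂ))
    (hDodd : (∀ x ∈ Vp, D x ∈ Vm) ∧ (∀ x ∈ Vm, D x ∈ Vp))
    (hcomm : H ∘L D = D ∘L H) (t : ℝ) :
    LinearMap.trace ℂ V
        (τ ∘ₗ (H ∘L NormedSpace.exp (-(t : ℂ) • (D ∘L D))).toLinearMap) =
      LinearMap.trace ℂ V
        (τ ∘ₗ H.toLinearMap ∘ₗ
          ((LinearMap.ker (D : V →ₗ[ℂ] V)).subtype ∘ₗ
            (Submodule.orthogonalProjectionOnto (LinearMap.ker (D : V →ₗ[ℂ] V))).toLinearMap)) := by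
  set heat := NormedSpace.exp (-(t : ℂ) • (D ∘L D))
  set K := ker (D : V →ₗ[ℂ] V)
  obtain ⟨G, hDG, hGD⟩ :=
    (show (D : V →ₗ[ℂ] V).IsSymmetric from hD).exists_mul_eq_starProjection_orthogonal_ker
  have hτD := grading_mul_eq_neg_mul_grading_of_odd hcompl hτp hτm hDodd.1 hDodd.2
  have hHeatD : Commute ((H : Module.End ℂ V) * heat) D := by
    have hD2 : Commute (-(t : ℂ) • (D * D)) D :=
      ((Commute.refl D).mul_left (Commute.refl D)).smul_left _
    exact congrArg ContinuousLinearMap.toLinearMap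
      ((show Commute H D from hcomm).mul_left hD2.exp_left).eq
  have hheat : (heat : Module.End ℂ V) * K.starProjection = K.starProjection := by
    ext x
    refine NormedSpace.exp_apply_eq_self_of_apply_eq_zero (𝕜 := ℂ) ?_
    simp [show D (K.starProjection x) = 0 from K.starProjection_apply_mem x]
  have hsplit : (1 : Module.End ℂ V) = K.starProjection + Kᗮ.starProjection :=
    congrArg ContinuousLinearMap.toLinearMap K.id_eq_sum_starProjection_self_orthogonalComplement
  change trace ℂ V (τ * (H * heat)) = trace ℂ V (τ * (H * K.starProjection))
  calc trace ℂ V (τ * (H * heat))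
      = trace ℂ V (τ * (H * heat) * K.starProjection)
          + trace ℂ V (τ * (H * heat) * Kᗮ.starProjection) := by
        rw [← map_add, ← mul_add, ← hsplit, mul_one]
    _ = trace ℂ V (τ * (H * K.starProjection)) := by
      rw [trace_mul_eq_zero_of_anticommute hτD hHeatD hDG hGD, add_zero, mul_assoc, mul_assoc,
        hheat]

/-- Finite-dimensional McKean–Singer formula (the mechanism of Theorem 1.1): for a
self-adjoint odd endomorphism `D` and an even endomorphism `H` commuting with `D` on a
finite-dimensional ℤ₂-graded complex inner product space `V = V⁺ ⊕ V⁻` (orthogonal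
grading, with grading operator `τ = ±1` on `V^±`), one has for every real `t`
`str(H exp(−tD²)) = str(H|_{ker D})`, where the right-hand side is computed as the trace
of `τ ∘ H` composed with the orthogonal projection onto `ker D`. -/
theorem mcKeanSinger_finite_dimensional
    (V : Type*) [NormedAddCommGroup V] [InnerProductSpace ℂ V] [FiniteDimensional ℂ V]
    (Vp Vm : Submodule ℂ V) (hcompl : IsCompl Vp Vm)
    (horth : ∀ x ∈ Vp, ∀ y ∈ Vm, (inner ℂ x y : ℂ) = 0)
    (τ : V →ₗ[ℂ] V) (hτp : ∀ x ∈ Vp, τ x = x) (hτm : ∀ x ∈ Vm, τ x = -x)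
    (D H : V →L[ℂ] V)
    (hD : ∀ x y : V, (inner ℂ (D x) y : ℂ) = (inner ℂ x (D y) : ℂ))
    (hDodd : (∀ x ∈ Vp, D x ∈ Vm) ∧ (∀ x ∈ Vm, D x ∈ Vp))
    (hHeven : (∀ x ∈ Vp, H x ∈ Vp) ∧ (∀ x ∈ Vm, H x ∈ Vm))
    (hcomm : H ∘L D = D ∘L H) (t : ℝ) :
    LinearMap.trace ℂ V
        (τ ∘ₗ (H ∘L NormedSpace.exp (-(t : ℂ) • (D ∘L D))).toLinearMap) =
      LinearMap.trace ℂ V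
        (τ ∘ₗ H.toLinearMap ∘ₗ
          ((LinearMap.ker (D : V →ₗ[ℂ] V)).subtype ∘ₗ
            (Submodule.orthogonalProjectionOnto (LinearMap.ker (D : V →ₗ[ℂ] V))).toLinearMap)) :=
  mcKeanSinger_finite_dimensional_general V Vp Vm hcompl τ hτp hτm D H hD hDodd hcomm t
end

section
/- Let R be a (not necessarily commutative) ring and let P, E, F, G ∈ R satisfy P² = P, PF = 0, FP = 0, FG = GF, and GF² = 1 − P. Set α = F², β = EF + FE, and consider ϑ' = E². Then P·(ϑ' − β·G·β)·P = (P E P)². (This is the algebraic identity underlying Bismut's Theorem [B11b, Theorem 2.16.1] (Theorem 3.14/equation (3.5.34) of the paper), asserting that the projected operator P(ϑ − βα⁻¹β)P recovers the elliptic Laplacian; here G plays the role of the inverse of α = F² on the complement of the kernel of F, and β = [E,F] is the supercommutator of the odd elements E and F.) -/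
/-! Since `P` kills `F` on both sides, `P β = P E F` and `β P = F E P`, so
`P β G β P = P E (F G F) E P = P E (1 - P) E P`, because `F G F = G F² = 1 - P`.
Subtracting this from `P E² P` leaves `P E P E P`, which is `(P E P)²` as `P² = P`. -/

section Corner

variable {R : Type*} [Ring R]

theorem mul_anticomm_of_mul_eq_zero {P F : R} (hPF : P * F = 0) (E : R) :
    P * (E * F + F * E) = P * E * F := by
  rw [mul_add, ← mul_assoc P F, hPF, zero_mul, add_zero, mul_assoc]

theorem anticomm_mul_of_mul_eq_zero {P F : R} (hFP : F * P = 0) (E : R) :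
    (E * F + F * E) * P = F * E * P := by
  rw [add_mul, mul_assoc E F, hFP, mul_zero, zero_add]

theorem mul_mul_eq_of_mul_comm {F G Q : R} (hFG : F * G = G * F) (hGF : G * (F * F) = Q) :
    F * G * F = Q := by
  rw [hFG, mul_assoc, hGF]

theorem corner_anticomm_mul_mul_anticomm {P E F G : R} (hPF : P * F = 0) (hFP : F * P = 0)
    (hFG : F * G = G * F) (hGF : G * (F * F) = 1 - P) :
    P * ((E * F + F * E) * G * (E * F + F * E)) * P = P * E * (1 - P) * E * P := by
  calc P * ((E * F + F * E) * G * (E * F + F * E)) * P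
      = P * (E * F + F * E) * G * ((E * F + F * E) * P) := by noncomm_ring
    _ = P * E * (F * G * F) * E * P := by
        rw [mul_anticomm_of_mul_eq_zero hPF, anticomm_mul_of_mul_eq_zero hFP]; noncomm_ring
    _ = P * E * (1 - P) * E * P := by rw [mul_mul_eq_of_mul_comm hFG hGF]

theorem corner_mul_corner_of_mul_self {P : R} (hP : P * P = P) (a b : R) :
    (P * a * P) * (P * b * P) = P * a * P * b * P := by
  rw [show P * a * P * (P * b * P) = P * a * (P * P) * b * P by noncomm_ring, hP]

end Corner

/-- The algebraic identity underlying Bismut's Theorem 2.16.1 (equation (3.5.34)):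
in a ring, if `P² = P`, `PF = FP = 0`, `FG = GF` and `GF² = 1 − P`, then, with
`α = F²`, `β = EF + FE` and `ϑ' = E²`, one has `P(ϑ' − βGβ)P = (PEP)²`. -/
theorem projected_hypoelliptic_identity
    {R : Type*} [Ring R] (P E F G : R)
    (hP : P * P = P) (hPF : P * F = 0) (hFP : F * P = 0)
    (hFG : F * G = G * F) (hGF : G * (F * F) = 1 - P) :
    P * (E * E - (E * F + F * E) * G * (E * F + F * E)) * P =
      (P * E * P) * (P * E * P) := by
  calc P * (E * E - (E * F + F * E) * G * (E * F + F * E)) * P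
      = P * E * E * P - P * ((E * F + F * E) * G * (E * F + F * E)) * P := by noncomm_ring
    _ = P * E * E * P - P * E * (1 - P) * E * P := by
        rw [corner_anticomm_mul_mul_anticomm hPF hFP hFG hGF]
    _ = P * E * P * E * P := by noncomm_ring
    _ = (P * E * P) * (P * E * P) := (corner_mul_corner_of_mul_self hP E E).symm
end

section
/- Let W be a real inner product space of even dimension 2l, and let A be an orthogonal endomorphism of W with det(A) = 1. Then for every real t, |det(id_W − e^t A) · det(id_W − e^{−t} A)|^{1/2} = |∑_{j=0}^{2l} (−1)^j tr(Λ^j A) e^{(l−j)t}|. (The linear-algebra core of Shen's Proposition 4.3.6 (Proposition [Shen16, Proposition 6.5]), which removes the denominator |det(1 − Ad(γ))|_{𝔷₀^⊥}|^{1/2} in the dynamical zeta function.) -/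
open ExteriorAlgebra

/-!
Expanding `det (1 + c M)` multilinearly in the rows gives `∑ₖ cᵏ` times the sum of the
`k × k` principal minors of `M`, and in the wedge basis of `⋀ᵏ W` the diagonal entries of
`Λᵏ A` are exactly these minors. Hence `det (1 - u A) = ∑ⱼ (-u)ʲ tr Λʲ A`, and the alternating
sum equals `e^{lt} det (1 - e^{-t} A)`.

If `A` is orthogonal, `Aᵀ (1 - u A) = Aᵀ - u`, so
`det A · det (1 - u A) = (-u)^{2l} det (1 - u⁻¹ A)`. With `det A = 1` this gives
`det (1 - e^t A) = e^{2lt} det (1 - e^{-t} A)`, and the product under the square root is the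
square of the alternating sum.
-/

open Finset Matrix

open Polynomial in
theorem Matrix.det_one_add_smul_eq_sum_minors {n R : Type*} [Fintype n] [DecidableEq n]
    [CommRing R] (M : Matrix n n R) (c : R) :
    (1 + c • M).det = ∑ k ∈ range (Fintype.card n + 1),
      c ^ k * ∑ s ∈ powersetCard k univ,
        (M.submatrix (Subtype.val : s → n) Subtype.val).det := by
  set p : R[X] := (1 + (X : R[X]) • M.map C).det
  have hdeg : p.natDegree < Fintype.card n + 1 := by
    refine Nat.lt_succ_of_le (natDegree_le_iff_coeff_eq_zero.mpr fun k hk => ?_)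
    rw [coeff_det_one_add_X_smul_eq_sum_minors, powersetCard_eq_empty.mpr (by simpa using hk),
      sum_empty]
  have heval : p.eval c = (1 + c • M).det := by
    rw [← coe_evalRingHom, RingHom.map_det]
    congr 1
    ext i j
    by_cases h : i = j <;> simp [h, mul_comm c]
  rw [← heval, eval_eq_sum_range' hdeg]
  refine sum_congr rfl fun k _ => ?_
  rw [coeff_det_one_add_X_smul_eq_sum_minors, mul_comm]

theorem Matrix.det_mul_det_one_sub_smul_of_transpose_mul_self {n K : Type*} [Fintype n]
    [DecidableEq n] [Field K] {M : Matrix n n K} (hM : Mᵀ * M = 1) {u : K} (hu : u ≠ 0) :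
    M.det * (1 - u • M).det = (-u) ^ Fintype.card n * (1 - u⁻¹ • M).det := by
  calc M.det * (1 - u • M).det = (Mᵀ * (1 - u • M)).det := by rw [det_mul, det_transpose]
    _ = (M - u • 1)ᵀ.det := by
      rw [mul_sub, mul_one, mul_smul_comm, hM, transpose_sub, transpose_smul, transpose_one]
    _ = ((-u) • (1 - u⁻¹ • M)).det := by
      rw [det_transpose, smul_sub, smul_smul, neg_mul, mul_inv_cancel₀ hu, neg_one_smul,
        sub_neg_eq_add, add_comm, neg_smul, ← sub_eq_add_neg]
    _ = (-u) ^ Fintype.card n * (1 - u⁻¹ • M).det := det_smul _ _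

theorem exteriorPowerMap_eq_map {R M : Type*} [CommRing R] [AddCommGroup M] [Module R M]
    (k : ℕ) (f : M →ₗ[R] M) : exteriorPowerMap k f = exteriorPower.map k f := by
  refine exteriorPower.linearMap_ext (AlternatingMap.ext fun v => Subtype.ext ?_)
  simp [exteriorPowerMap, ExteriorAlgebra.map_apply_ιMulti, Function.comp_def]

theorem trace_exteriorPowerMap_eq_sum_minors {R M ι : Type*} [CommRing R] [AddCommGroup M]
    [Module R M] [Fintype ι] [LinearOrder ι] (b : Module.Basis ι R M) (f : M →ₗ[R] M) (k : ℕ) :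
    LinearMap.trace R (⋀[R]^k M) (exteriorPowerMap k f) =
      ∑ s ∈ powersetCard k univ,
        ((LinearMap.toMatrix b b f).submatrix (Subtype.val : s → ι) Subtype.val).det := by
  rw [exteriorPowerMap_eq_map, LinearMap.trace_eq_matrix_trace R (b.exteriorPower k),
    Matrix.trace]
  have hmem : ∀ s : Finset ι, s ∈ powersetCard k univ ↔ s ∈ Set.powersetCard ι k := by
    simp [Set.powersetCard.mem_iff]
  rw [sum_subtype _ hmem]
  refine sum_congr rfl fun s _ => ?_
  rw [Matrix.diag_apply, LinearMap.toMatrix_apply, exteriorPower.basis_apply,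
    exteriorPower.map_apply_ιMulti_family, exteriorPower.basis_repr_apply,
    exteriorPower.ιMulti_family, exteriorPower.ιMultiDual_apply_ιMulti]
  set σ : Fin k ≃ s.val := (s.val.orderIsoOfFin s.prop).toEquiv
  have hσ : Matrix.of (fun i j => b.coord (Set.powersetCard.ofFinEmbEquiv.symm s j)
      (((f ∘ b) ∘ Set.powersetCard.ofFinEmbEquiv.symm s) i)) =
      (((LinearMap.toMatrix b b f).submatrix Subtype.val Subtype.val).submatrix σ σ)ᵀ := by
    ext i j
    simp only [of_apply, transpose_apply, submatrix_apply, Function.comp_apply,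
      Module.Basis.coord_apply, LinearMap.toMatrix_apply]
    -- `ofFinEmbEquiv.symm s` is `orderIsoOfFin` followed by the inclusion of `s`
    rfl
  rw [hσ, Matrix.det_transpose, Matrix.det_submatrix_equiv_self]

theorem LinearMap.det_id_sub_smul_eq_sum_trace_exteriorPowerMap {R M : Type*} [CommRing R]
    [Nontrivial R] [AddCommGroup M] [Module R M] [Module.Free R M] [Module.Finite R M]
    (f : M →ₗ[R] M) (u : R) :
    LinearMap.det (LinearMap.id - u • f) = ∑ k ∈ Finset.range (Module.finrank R M + 1),
      (-u) ^ k * LinearMap.trace R (⋀[R]^k M) (exteriorPowerMap k f) := by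
  let b := Module.finBasis R M
  rw [← LinearMap.det_toMatrix b, map_sub, LinearMap.toMatrix_id, map_smul, sub_eq_add_neg,
    ← neg_smul, det_one_add_smul_eq_sum_minors, Fintype.card_fin]
  simp_rw [trace_exteriorPowerMap_eq_sum_minors b]

open RealInnerProductSpace in
theorem LinearMap.det_mul_det_id_sub_smul_of_inner_map_map {W : Type*} [NormedAddCommGroup W]
    [InnerProductSpace ℝ W] [FiniteDimensional ℝ W] {A : W →ₗ[ℝ] W}
    (hA : ∀ x y, ⟪A x, A y⟫ = ⟪x, y⟫) {u : ℝ} (hu : u ≠ 0) :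
    LinearMap.det A * LinearMap.det (LinearMap.id - u • A) =
      (-u) ^ Module.finrank ℝ W * LinearMap.det (LinearMap.id - u⁻¹ • A) := by
  let b := (stdOrthonormalBasis ℝ W).toBasis
  have hM : (toMatrix b b A)ᵀ * toMatrix b b A = 1 := by
    have := ((A.isometryOfInner hA).toLinearIsometryEquiv rfl).toMatrix_mem_unitaryGroup
      (stdOrthonormalBasis ℝ W) (stdOrthonormalBasis ℝ W)
    rwa [Matrix.mem_unitaryGroup_iff', Matrix.star_eq_conjTranspose,
      Matrix.conjTranspose_eq_transpose_of_trivial] at this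
  simp_rw [← LinearMap.det_toMatrix b, map_sub, LinearMap.toMatrix_id, map_smul]
  rw [det_mul_det_one_sub_smul_of_transpose_mul_self hM hu, Fintype.card_fin]

/-- The linear-algebra core of Shen's Proposition 6.5: if `A` is an orthogonal
endomorphism with `det A = 1` of a real inner product space `W` of even dimension `2l`,
then for every real `t`,
`|det(1 − e^t A) · det(1 − e^{−t} A)|^{1/2} = |∑_{j=0}^{2l} (−1)^j tr(Λ^j A) e^{(l−j)t}|`. -/
theorem abs_sqrt_det_one_sub_exp_eq_abs_alternating_sum
    (W : Type*) [NormedAddCommGroup W] [InnerProductSpace ℝ W] [FiniteDimensional ℝ W]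
    (l : ℕ) (hdim : Module.finrank ℝ W = 2 * l)
    (A : W →ₗ[ℝ] W)
    (hA : ∀ x y : W, inner ℝ (A x) (A y) = (inner ℝ x y : ℝ))
    (hdet : LinearMap.det A = 1) (t : ℝ) :
    Real.sqrt |LinearMap.det (LinearMap.id - Real.exp t • A) *
        LinearMap.det (LinearMap.id - Real.exp (-t) • A)| =
      |∑ j ∈ Finset.range (2 * l + 1),
        (-1 : ℝ) ^ j * LinearMap.trace ℝ (⋀[ℝ]^j W) (exteriorPowerMap j A) *
          Real.exp (((l : ℝ) - (j : ℝ)) * t)| := by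
  have hsum : ∑ j ∈ Finset.range (2 * l + 1),
      (-1 : ℝ) ^ j * LinearMap.trace ℝ (⋀[ℝ]^j W) (exteriorPowerMap j A) *
        Real.exp (((l : ℝ) - (j : ℝ)) * t) =
      Real.exp (l * t) * LinearMap.det (LinearMap.id - Real.exp (-t) • A) := by
    rw [LinearMap.det_id_sub_smul_eq_sum_trace_exteriorPowerMap, hdim, mul_sum]
    refine sum_congr rfl fun j _ => ?_
    have hexp : Real.exp (((l : ℝ) - (j : ℝ)) * t) = Real.exp (l * t) * Real.exp (-t) ^ j := by
      rw [← Real.exp_nat_mul, ← Real.exp_add]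
      ring_nf
    rw [hexp, neg_pow (Real.exp (-t))]
    ring
  have hpalindromic : LinearMap.det (LinearMap.id - Real.exp t • A) =
      Real.exp (l * t) ^ 2 * LinearMap.det (LinearMap.id - Real.exp (-t) • A) := by
    have := LinearMap.det_mul_det_id_sub_smul_of_inner_map_map hA (Real.exp_ne_zero t)
    rw [hdet, one_mul, hdim, (even_two_mul l).neg_pow, ← Real.exp_neg] at this
    rw [this, ← Real.exp_nat_mul, ← Real.exp_nat_mul]
    push_cast
    ring_nf
  rw [hsum, hpalindromic, mul_assoc, ← sq, ← mul_pow, abs_of_nonneg (sq_nonneg _),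
    Real.sqrt_sq_eq_abs]
end
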